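/- If the transport maps of a discrete O(d)-bundle over a connected graph are path-independent (any two paths between the same pair of nodes induce the same transport map), then the normalised sheaf Laplacian has a non-trivial kernel, i.e. its smallest eigenvalue is 0. -/

import Mathlib

open Matrix BigOperators

/-- The transport map along a path `(v₀, v₁, …, v_L)`, composing `F_{v_{i+1}⊴e}ᵀ F_{v_i⊴e}`
along consecutive edges.  `F v u` denotes `F_{v ⊴ e}` for the edge `e = (v,u)`. -/
def transport {V : Type*} {d : ℕ} (F : V → V → Matrix (Fin d) (Fin d) ℝ) :
    List V → Matrix (Fin d) (Fin d) ℝ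
  | [] => 1
  | [_] => 1
  | v :: u :: rest => transport F (u :: rest) * ((F u v)ᵀ * F v u)

/-- `p` is a walk in `G` from `v` to `u`. -/
def IsPathFrom {V : Type*} (G : SimpleGraph V) (p : List V) (v u : V) : Prop :=
  p.head? = some v ∧ p.getLast? = some u ∧ p.Chain' G.Adj

/-- The normalised sheaf Laplacian `Δ_F = D^{-1/2} L_F D^{-1/2}`, written as a matrix
indexed by `V × Fin d`, for a sheaf with `d`-dimensional stalks. -/
noncomputable def normSheafLaplacian {V : Type*} [Fintype V] [DecidableEq V] (G : SimpleGraph V)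
    [DecidableRel G.Adj] {d : ℕ} (F : V → V → Matrix (Fin d) (Fin d) ℝ) :
    Matrix (V × Fin d) (V × Fin d) ℝ :=
  fun p q =>
    (if p.1 = q.1 then (∑ w ∈ G.neighborFinset p.1, (F p.1 w)ᵀ * F p.1 w) p.2 q.2
     else if G.Adj p.1 q.1 then -(((F p.1 q.1)ᵀ * F q.1 p.1) p.2 q.2) else 0)
    / (Real.sqrt (G.degree p.1) * Real.sqrt (G.degree q.1))

/-!
Fix a root `v₀` and a nonzero `c`, and let `y v` be the transport of `c` along some walk from
`v₀` to `v`. Path independence lets one compute `y u` through any neighbour `v` of `u`, so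
`y u = F_{u⊴e}ᵀ F_{v⊴e} y v`, i.e. `F_{u⊴e} y u = F_{v⊴e} y v` by orthogonality: `y` is a
global section, hence `L_F y = 0`, and `D^{1/2} y` lies in the kernel of
`Δ_F = D^{-1/2} L_F D^{-1/2}`. If some vertex is isolated, its stalk is already in the kernel.
-/

section Transport

variable {V : Type*} {d : ℕ} (F : V → V → Matrix (Fin d) (Fin d) ℝ)

lemma transport_concat :
    ∀ {γ : List V} {v : V} (u : V), γ.getLast? = some v →
      transport F (γ ++ [u]) = (F u v)ᵀ * F v u * transport F γ
  | [], _, _, h => by simp at h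
  | [_], _, _, h => by
      obtain rfl := Option.some_injective _ h
      simp [transport]
  | a :: b :: rest, v, u, h => by
      have ih := transport_concat (γ := b :: rest) u (by simpa using h)
      simp only [List.cons_append] at ih ⊢
      rw [transport, ih, transport, mul_assoc]

end Transport

section Paths

variable {V : Type*} {G : SimpleGraph V}

lemma isPathFrom_singleton (v : V) : IsPathFrom G [v] v v :=
  ⟨rfl, rfl, List.isChain_singleton v⟩

lemma IsPathFrom.concat {γ : List V} {w v u : V} (hγ : IsPathFrom G γ w v) (hvu : G.Adj v u) :
    IsPathFrom G (γ ++ [u]) w u := by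
  obtain ⟨hhead, hlast, hchain⟩ := hγ
  have hne : γ ≠ [] := by rintro rfl; simp at hhead
  refine ⟨by rw [List.head?_append_of_ne_nil _ hne, hhead], by simp, ?_⟩
  refine List.isChain_append.mpr ⟨hchain, List.isChain_singleton u, ?_⟩
  rintro a ha b hb
  simp_all

lemma SimpleGraph.Walk.isPathFrom_support {v u : V} (p : G.Walk v u) :
    IsPathFrom G p.support v u :=
  ⟨by rw [← p.cons_tail_support]; rfl,
    by rw [List.getLast?_eq_some_getLast p.support_ne_nil, p.getLast_support],
    p.isChain_adj_support⟩

end Paths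

section Sheaf

variable {V : Type*} (G : SimpleGraph V) {d : ℕ} (F : V → V → Matrix (Fin d) (Fin d) ℝ)

def IsGlobalSection (y : V → Fin d → ℝ) : Prop :=
  ∀ v u, G.Adj v u → F v u *ᵥ y v = F u v *ᵥ y u

variable {G F}

theorem exists_isGlobalSection_of_transport_eq (hconn : G.Connected)
    (horth : ∀ v u : V, G.Adj v u → F v u ∈ Matrix.orthogonalGroup (Fin d) ℝ)
    (hpi : ∀ (v u : V) (γ γ' : List V), IsPathFrom G γ v u → IsPathFrom G γ' v u →
      transport F γ = transport F γ')
    (v₀ : V) (c : Fin d → ℝ) :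
    ∃ y : V → Fin d → ℝ, IsGlobalSection G F y ∧ y v₀ = c := by
  let γ (v : V) : List V := (hconn v₀ v).some.support
  have hγ (v : V) : IsPathFrom G (γ v) v₀ v := (hconn v₀ v).some.isPathFrom_support
  refine ⟨fun v => transport F (γ v) *ᵥ c, fun v u hvu => ?_, ?_⟩
  · have hstep : transport F (γ u) = (F u v)ᵀ * F v u * transport F (γ v) := by
      rw [hpi _ _ _ _ (hγ u) ((hγ v).concat hvu), transport_concat F u (hγ v).2.1]
    have hinv : F u v * (F u v)ᵀ = 1 :=
      (Matrix.mem_orthogonalGroup_iff (Fin d) ℝ).mp (horth u v hvu.symm)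
    simp only [hstep, Matrix.mulVec_mulVec, ← Matrix.mul_assoc, hinv, Matrix.one_mul]
  · simp only [hpi _ _ _ _ (hγ v₀) (isPathFrom_singleton v₀), transport, Matrix.one_mulVec]

end Sheaf

section Laplacian

variable {V : Type*} [Fintype V] [DecidableEq V] (G : SimpleGraph V) [DecidableRel G.Adj] {d : ℕ}
  (F : V → V → Matrix (Fin d) (Fin d) ℝ)

def sheafLaplacian : Matrix (V × Fin d) (V × Fin d) ℝ :=
  fun p q =>
    if p.1 = q.1 then (∑ w ∈ G.neighborFinset p.1, (F p.1 w)ᵀ * F p.1 w) p.2 q.2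
    else if G.Adj p.1 q.1 then -(((F p.1 q.1)ᵀ * F q.1 p.1) p.2 q.2) else 0

lemma normSheafLaplacian_eq_diagonal_mul :
    normSheafLaplacian G F =
      diagonal (fun q => (√(G.degree q.1 : ℝ))⁻¹) * sheafLaplacian G F *
        diagonal (fun q => (√(G.degree q.1 : ℝ))⁻¹) := by
  ext p q
  rw [Matrix.mul_diagonal, Matrix.diagonal_mul, normSheafLaplacian, sheafLaplacian,
    div_eq_mul_inv, mul_inv]
  ring

-- Relies on `x / 0 = 0`; the matching column of `sheafLaplacian` vanishes as well.
lemma normSheafLaplacian_apply_of_degree_eq_zero {p q : V × Fin d} (hq : G.degree q.1 = 0) :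
    normSheafLaplacian G F p q = 0 := by
  simp [normSheafLaplacian, hq]

variable {G F}

lemma sum_ite_eq_add_sum_neighborFinset {M : Type*} [AddCommMonoid M] (v : V) (f g : V → M) :
    ∑ u, (if v = u then f u else if G.Adj v u then g u else 0) =
      f v + ∑ u ∈ G.neighborFinset v, g u := by
  have hsplit (u : V) : (if v = u then f u else if G.Adj v u then g u else 0) =
      (if v = u then f u else 0) + (if G.Adj v u then g u else 0) := by
    split_ifs <;> simp_all
  simp only [hsplit, Finset.sum_add_distrib, Finset.sum_ite_eq, Finset.mem_univ, if_true,
    ← Finset.sum_filter, SimpleGraph.neighborFinset_eq_filter]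

lemma sheafLaplacian_mulVec_eq_zero {y : V → Fin d → ℝ} (hy : IsGlobalSection G F y) :
    sheafLaplacian G F *ᵥ (fun q => y q.1 q.2) = 0 := by
  ext ⟨v, i⟩
  have hblock (u : V) : ∑ j, sheafLaplacian G F (v, i) (u, j) * y u j =
      if v = u then ((∑ w ∈ G.neighborFinset v, (F v w)ᵀ * F v w) *ᵥ y u) i
      else if G.Adj v u then -(((F v u)ᵀ * F u v) *ᵥ y u) i else 0 := by
    simp only [sheafLaplacian]
    split_ifs <;> simp [Matrix.mulVec, dotProduct]
  rw [Matrix.mulVec, dotProduct, Fintype.sum_prod_type]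
  simp only [hblock, sum_ite_eq_add_sum_neighborFinset, Matrix.sum_mulVec, Finset.sum_apply,
    ← Finset.sum_add_distrib, Pi.zero_apply]
  refine Finset.sum_eq_zero fun w hw => ?_
  rw [← Matrix.mulVec_mulVec, ← Matrix.mulVec_mulVec,
    hy v w ((G.mem_neighborFinset v w).mp hw), add_neg_cancel]

lemma normSheafLaplacian_mulVec_sqrt_degree_mul (hdeg : ∀ v, 0 < G.degree v)
    {y : V → Fin d → ℝ} (hy : IsGlobalSection G F y) :
    normSheafLaplacian G F *ᵥ (fun q => √(G.degree q.1 : ℝ) * y q.1 q.2) = 0 := by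
  have hsqrt (v : V) : √(G.degree v : ℝ) ≠ 0 := by positivity [hdeg v]
  have hcancel : diagonal (fun q : V × Fin d => (√(G.degree q.1 : ℝ))⁻¹) *ᵥ
      (fun q : V × Fin d => √(G.degree q.1 : ℝ) * y q.1 q.2) = fun q => y q.1 q.2 := by
    ext q
    rw [Matrix.mulVec_diagonal, inv_mul_cancel_left₀ (hsqrt _)]
  rw [normSheafLaplacian_eq_diagonal_mul, ← Matrix.mulVec_mulVec, ← Matrix.mulVec_mulVec, hcancel,
    sheafLaplacian_mulVec_eq_zero hy, Matrix.mulVec_zero]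

end Laplacian

/-- If the transport maps of a discrete `O(d)`-bundle over a connected
graph are path-independent, then the normalised sheaf Laplacian has a non-trivial kernel
(equivalently, its smallest eigenvalue is `0`). -/
theorem nontrivial_kernel_of_path_independent {V : Type*} [Fintype V] [DecidableEq V]
    (G : SimpleGraph V) [DecidableRel G.Adj] (hconn : G.Connected) {d : ℕ} (hd : 0 < d)
    (F : V → V → Matrix (Fin d) (Fin d) ℝ)
    (horth : ∀ v u : V, G.Adj v u → F v u ∈ Matrix.orthogonalGroup (Fin d) ℝ)
    (hpi : ∀ (v u : V) (γ γ' : List V), IsPathFrom G γ v u → IsPathFrom G γ' v u →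
      transport F γ = transport F γ') :
    ∃ x : V × Fin d → ℝ, x ≠ 0 ∧ (normSheafLaplacian G F).mulVec x = 0 := by
  let i₀ : Fin d := ⟨0, hd⟩
  by_cases hdeg : ∀ v, 0 < G.degree v
  · obtain ⟨v₀⟩ := hconn.nonempty
    obtain ⟨y, hy, hy₀⟩ :=
      exists_isGlobalSection_of_transport_eq hconn horth hpi v₀ (Pi.single i₀ 1)
    refine ⟨_, fun h => ?_, normSheafLaplacian_mulVec_sqrt_degree_mul hdeg hy⟩
    have hx₀ := congrFun h (v₀, i₀)
    simp [hy₀, (hdeg v₀).ne'] at hx₀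
  · obtain ⟨w, hw⟩ := not_forall.mp hdeg
    refine ⟨Pi.single (w, i₀) 1, by simp, ?_⟩
    ext p
    rw [Matrix.mulVec_single_one, Matrix.col_apply,
      normSheafLaplacian_apply_of_degree_eq_zero G F (Nat.eq_zero_of_not_pos hw), Pi.zero_apply]
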